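/- Let k ≥ 2 and ℓ ≥ 2. Color each edge {v,w} of ST_k^ℓ with the unique position i ∈ {1,…,kℓ−1} such that w is obtained from v by transposing positions 0 and i, and color each vertex v with any position λ(v) ∈ {1,…,kℓ−1} satisfying v_{λ(v)} = v_0. Then the resulting assignment is a total coloring of ST_k^ℓ with color set {1,…,kℓ−1}: adjacent vertices get different colors, edges sharing an endvertex get different colors, and every vertex gets a color different from each of its incident edges. In particular, the total chromatic number of ST_k^ℓ is at most kℓ−1. -/
import Mathlib


/-- A string of length `k*l` over the alphabet `Fin k` in which every symbol
occurs exactly `l` times (an `l`-set permutation). -/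
def IsMSP (k l : ℕ) (v : Fin (k * l) → Fin k) : Prop :=
  ∀ a : Fin k, (Finset.univ.filter fun i => v i = a).card = l

/-- The vertex set of the star `l`-set transposition graph `ST_k^l`. -/
abbrev MSP (k l : ℕ) : Type := {v : Fin (k * l) → Fin k // IsMSP k l v}

/-- Star-transposition adjacency: `w` is obtained from `v` by transposing position `0`
with a position `i ≠ 0` whose entry differs from that of position `0`. -/
def STAdj (k l : ℕ) (v w : Fin (k * l) → Fin k) : Prop :=
  ∃ i j : Fin (k * l), (j : ℕ) = 0 ∧ i ≠ j ∧ v i ≠ v j ∧ w = v ∘ Equiv.swap j i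

/-- The star `l`-set transposition graph `ST_k^l`. -/
def STGraph (k l : ℕ) : SimpleGraph (MSP k l) :=
  SimpleGraph.fromRel fun v w => STAdj k l v.1 w.1

/-- edge colors given by the unique transposition position and vertex colors
`λ(v)` with `v_{λ(v)} = v_0`, `λ(v) ≠ 0`, form a total coloring of `ST_k^l` with color set
`{1, ..., k*l - 1}`. In particular the total chromatic number of `ST_k^l` is at most `k*l - 1`. -/
theorem stmt9 (k l : ℕ) (hk : 2 ≤ k) (hl : 2 ≤ l)
    (lam : MSP k l → Fin (k * l))
    (hlam : ∀ v : MSP k l, (lam v : ℕ) ≠ 0 ∧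
      v.1 (lam v) = v.1 ⟨0, Nat.mul_pos (by omega) (by omega)⟩) :
    (∀ v w : MSP k l, (STGraph k l).Adj v w → lam v ≠ lam w) ∧
    (∀ (u v w : MSP k l) (i j : Fin (k * l)),
      (STGraph k l).Adj u v → (STGraph k l).Adj u w → v ≠ w →
      v.1 = u.1 ∘ Equiv.swap ⟨0, Nat.mul_pos (by omega) (by omega)⟩ i →
      w.1 = u.1 ∘ Equiv.swap ⟨0, Nat.mul_pos (by omega) (by omega)⟩ j → i ≠ j) ∧
    (∀ (v w : MSP k l) (i : Fin (k * l)), (STGraph k l).Adj v w →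
      w.1 = v.1 ∘ Equiv.swap ⟨0, Nat.mul_pos (by omega) (by omega)⟩ i →
      lam v ≠ i ∧ lam w ≠ i) ∧
    ∃ (cv : MSP k l → Fin (k * l - 1)) (ce : (STGraph k l).edgeSet → Fin (k * l - 1)),
      (∀ v w : MSP k l, (STGraph k l).Adj v w → cv v ≠ cv w) ∧
      (∀ e f : (STGraph k l).edgeSet, e ≠ f →
        (∃ u : MSP k l, u ∈ (e : Sym2 (MSP k l)) ∧ u ∈ (f : Sym2 (MSP k l))) →
        ce e ≠ ce f) ∧
      (∀ (v : MSP k l) (e : (STGraph k l).edgeSet),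
        v ∈ (e : Sym2 (MSP k l)) → cv v ≠ ce e) := by
  classical
  have hkl : 0 < k * l := Nat.mul_pos (by omega) (by omega)
  set z : Fin (k * l) := ⟨0, hkl⟩ with hzdef
  -- key: from adjacency extract the canonical transposition position
  have key : ∀ v w : MSP k l, (STGraph k l).Adj v w →
      ∃ i : Fin (k * l), w.1 = v.1 ∘ Equiv.swap z i ∧ v.1 i ≠ v.1 z := by
    intro v w hvw
    simp only [STGraph, SimpleGraph.fromRel_adj, STAdj] at hvw
    obtain ⟨hne, h | h⟩ := hvw
    · obtain ⟨i, j, hj, hij, hvij, hw⟩ := h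
      have hjz : j = z := Fin.ext hj
      subst hjz
      exact ⟨i, hw, hvij⟩
    · obtain ⟨i, j, hj, hij, hwij, hv⟩ := h
      have hjz : j = z := Fin.ext hj
      subst hjz
      refine ⟨i, ?_, ?_⟩
      · funext x
        simp [hv, Equiv.swap_apply_self]
      · have h1 : v.1 i = w.1 z := by rw [hv]; simp
        have h2 : v.1 z = w.1 i := by rw [hv]; simp
        rw [h1, h2]; exact fun h => hwij h.symm
  have p1 : ∀ v w : MSP k l, (STGraph k l).Adj v w → lam v ≠ lam w := by
    intro v w hvw hlameq
    obtain ⟨i, hw, hvi⟩ := key v w hvw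
    obtain ⟨hlv0, hlv⟩ := hlam v
    obtain ⟨hlw0, hlw⟩ := hlam w
    have hlv' : v.1 (lam v) = v.1 z := hlv
    have hlw' : w.1 (lam w) = w.1 z := hlw
    have hpz : lam v ≠ z := fun h => hlv0 (by rw [h])
    rw [← hlameq, hw] at hlw'
    simp only [Function.comp_apply, Equiv.swap_apply_left] at hlw'
    by_cases hpi : lam v = i
    · rw [hpi, Equiv.swap_apply_right] at hlw'
      exact hvi hlw'.symm
    · rw [Equiv.swap_apply_of_ne_of_ne hpz hpi] at hlw'
      exact hvi (hlw'.symm.trans hlv')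
  have p3 : ∀ (v w : MSP k l) (i : Fin (k * l)), (STGraph k l).Adj v w →
      w.1 = v.1 ∘ Equiv.swap z i → lam v ≠ i ∧ lam w ≠ i := by
    intro v w i hvw hw
    have hne : v ≠ w := hvw.ne
    have hvi : v.1 i ≠ v.1 z := by
      intro h
      apply hne
      apply Subtype.ext
      funext x
      rw [hw]
      simp only [Function.comp_apply]
      rcases eq_or_ne x z with rfl | hxz
      · rw [Equiv.swap_apply_left]; exact h.symm
      rcases eq_or_ne x i with rfl | hxi
      · rw [Equiv.swap_apply_right]; exact h
      · rw [Equiv.swap_apply_of_ne_of_ne hxz hxi]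
    obtain ⟨hlv0, hlv⟩ := hlam v
    obtain ⟨hlw0, hlw⟩ := hlam w
    have hlv' : v.1 (lam v) = v.1 z := hlv
    have hlw' : w.1 (lam w) = w.1 z := hlw
    constructor
    · intro hli
      exact hvi (hli ▸ hlv')
    · intro hli
      rw [hli, hw] at hlw'
      simp only [Function.comp_apply, Equiv.swap_apply_right, Equiv.swap_apply_left] at hlw'
      exact hvi hlw'.symm
  refine ⟨p1, ?_, p3, ?_⟩
  · intro u v w i j hu hv hvw hvi hwj hij
    subst hij
    exact hvw (Subtype.ext (hvi.trans hwj.symm))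
  · -- construct the colorings
    have keyE : ∀ e : (STGraph k l).edgeSet, ∃ i : Fin (k * l), ∃ x y : MSP k l,
        (e : Sym2 (MSP k l)) = s(x, y) ∧ y.1 = x.1 ∘ Equiv.swap z i ∧ x.1 i ≠ x.1 z := by
      rintro ⟨e, he⟩
      induction e using Sym2.ind with
      | _ x y =>
        obtain ⟨i, hy, hxi⟩ := key x y (((STGraph k l).mem_edgeSet).mp he)
        exact ⟨i, x, y, rfl, hy, hxi⟩
    choose ie xe ye hee hye hxie using keyE
    have hie0 : ∀ e, (ie e : ℕ) ≠ 0 := by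
      intro e h
      have hz : ie e = z := Fin.ext h
      exact hxie e (by rw [hz])
    set cv : MSP k l → Fin (k * l - 1) :=
      fun v => ⟨(lam v : ℕ) - 1, by
        have h1 := (hlam v).1
        have h2 := (lam v).isLt
        omega⟩ with hcvdef
    set ce : (STGraph k l).edgeSet → Fin (k * l - 1) :=
      fun e => ⟨(ie e : ℕ) - 1, by
        have h1 := hie0 e
        have h2 := (ie e).isLt
        omega⟩ with hcedef
    have other : ∀ (e : (STGraph k l).edgeSet) (u : MSP k l),
        u ∈ (e : Sym2 (MSP k l)) →
        ∃ x : MSP k l, (e : Sym2 (MSP k l)) = s(u, x) ∧ x.1 = u.1 ∘ Equiv.swap z (ie e) := by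
      intro e u hu
      rw [hee e] at hu
      rcases Sym2.mem_iff.mp hu with rfl | rfl
      · exact ⟨ye e, hee e, hye e⟩
      · refine ⟨xe e, by rw [hee e, Sym2.eq_swap], ?_⟩
        funext x
        simp [hye e, Equiv.swap_apply_self]
    refine ⟨cv, ce, ?_, ?_, ?_⟩
    · intro v w hvw hcc
      apply p1 v w hvw
      have h := congrArg Fin.val hcc
      simp only [hcvdef] at h
      have h1 := (hlam v).1
      have h2 := (hlam w).1
      exact Fin.ext (by omega)
    · intro e f hef ⟨u, hue, huf⟩ hcc
      have h := congrArg Fin.val hcc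
      simp only [hcedef] at h
      have h1 := hie0 e
      have h2 := hie0 f
      have hieq : ie e = ie f := Fin.ext (by omega)
      obtain ⟨x1, he1, hx1⟩ := other e u hue
      obtain ⟨x2, hf1, hx2⟩ := other f u huf
      have hx12 : x1 = x2 := Subtype.ext (by rw [hx1, hx2, hieq])
      exact hef (Subtype.ext (by rw [he1, hf1, hx12]))
    · intro v e hv hcc
      obtain ⟨x, he1, hx⟩ := other e v hv
      have hadj : (STGraph k l).Adj v x := by
        have h2 := e.2
        rw [he1] at h2
        exact ((STGraph k l).mem_edgeSet).mp h2
      have hli := (p3 v x (ie e) hadj hx).1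
      apply hli
      have h := congrArg Fin.val hcc
      simp only [hcvdef, hcedef] at h
      have h1 := (hlam v).1
      have h2 := hie0 e
      exact Fin.ext (by omega)
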